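/- arXiv:1601.02258 — 2 statements merged into one kernel-verified Lean document; each statement's English description precedes it below -/
import Mathlib

section
/- Let G be a simple graph on a finite vertex type V, let ℓ, ℓ' ∈ ℕ with ℓ' ≤ ℓ, and let G' be the simple graph on the vertex type V ⊕ Fin ℓ defined by: inl(a) and inl(b) are adjacent in G' if and only if a and b are adjacent in G; each new vertex inr(j) with j < ℓ' is adjacent to every vertex other than itself; and each new vertex inr(j) with j ≥ ℓ' is adjacent only to the vertices inr(j') with j' < ℓ'. Then for every k ≥ 2, G contains a clique of size k if and only if G' contains a clique of size k + ℓ'. -/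
private def padEmbL (V : Type*) (ℓ : ℕ) : V ↪ V ⊕ Fin ℓ :=
  ⟨Sum.inl, Sum.inl_injective⟩

private def padEmbU (V : Type*) {ℓ ℓ' : ℕ} (hℓ : ℓ' ≤ ℓ) : Fin ℓ' ↪ V ⊕ Fin ℓ :=
  ⟨fun j => Sum.inr (Fin.castLE hℓ j), fun a b h => by
    simpa [Fin.ext_iff] using h⟩

@[simp] private lemma padEmbL_apply (V : Type*) (ℓ : ℕ) (a : V) :
    padEmbL V ℓ a = Sum.inl a := rfl

@[simp] private lemma padEmbU_apply (V : Type*) {ℓ ℓ' : ℕ} (hℓ : ℓ' ≤ ℓ) (j : Fin ℓ') :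
    padEmbU V hℓ j = Sum.inr (Fin.castLE hℓ j) := rfl




/-- The padding construction of the k-clique reduction: `ℓ` new vertices are
added to a graph `G` on a finite vertex type `V`, of which the first `ℓ'` are
universal (adjacent to every vertex other than themselves) and the remaining
`ℓ - ℓ'` are adjacent only to the universal new vertices. Then, for every
`k ≥ 2`, `G` contains a clique of size `k` iff the padded graph `G'` contains
a clique of size `k + ℓ'`. -/
theorem clique_padding_mixed (V : Type*) [Fintype V] (G : SimpleGraph V)
    (ℓ ℓ' : ℕ) (hℓ : ℓ' ≤ ℓ) (G' : SimpleGraph (V ⊕ Fin ℓ))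
    (hOld : ∀ a b : V, G'.Adj (Sum.inl a) (Sum.inl b) ↔ G.Adj a b)
    (hUniv : ∀ (j : Fin ℓ) (x : V ⊕ Fin ℓ),
      (j : ℕ) < ℓ' → x ≠ Sum.inr j → G'.Adj (Sum.inr j) x)
    (hRest : ∀ (j : Fin ℓ) (x : V ⊕ Fin ℓ), ℓ' ≤ (j : ℕ) →
      (G'.Adj (Sum.inr j) x ↔ ∃ j' : Fin ℓ, x = Sum.inr j' ∧ (j' : ℕ) < ℓ'))
    (k : ℕ) (hk : 2 ≤ k) :
    (∃ t : Finset V, G.IsNClique k t) ↔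
      (∃ t : Finset (V ⊕ Fin ℓ), G'.IsNClique (k + ℓ') t) := by
  classical
  constructor
  · rintro ⟨t, ht⟩
    refine ⟨t.map (padEmbL V ℓ) ∪
      (Finset.univ : Finset (Fin ℓ')).map (padEmbU V hℓ), ?_, ?_⟩
    · intro x hx y hy hxy
      simp only [Finset.coe_union, Set.mem_union, Finset.coe_map,
        Set.mem_image, Finset.mem_coe, Finset.coe_univ, Set.image_univ,
        Set.mem_range, padEmbL_apply, padEmbU_apply] at hx hy
      rcases hx with ⟨a, ha, rfl⟩ | ⟨j, rfl⟩
      · rcases hy with ⟨b, hb, rfl⟩ | ⟨j, rfl⟩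
        · exact (hOld a b).2 (ht.1 ha hb (by simpa using hxy))
        · exact (hUniv _ _ (by simp) (by simp)).symm
      · exact hUniv _ _ (by simp) (Ne.symm hxy)
    · rw [Finset.card_union_of_disjoint, Finset.card_map, Finset.card_map,
        Finset.card_univ, Fintype.card_fin, ht.2]
      simp [Finset.disjoint_left]
  · rintro ⟨t, ht⟩
    have hnoRest : ∀ j : Fin ℓ, Sum.inr j ∈ t → (j : ℕ) < ℓ' := by
      intro j hj
      by_contra h
      push_neg at h
      have hsub : t ⊆ insert (Sum.inr j)
          ((Finset.univ : Finset (Fin ℓ')).map (padEmbU V hℓ)) := by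
        intro x hx
        rcases eq_or_ne x (Sum.inr j) with rfl | hne
        · exact Finset.mem_insert_self _ _
        · have hadj := ht.1 hj hx (fun h => hne h.symm)
          rcases (hRest j x h).1 hadj with ⟨j', rfl, hj'⟩
          refine Finset.mem_insert_of_mem ?_
          simp only [Finset.mem_map, Finset.mem_univ, true_and]
          exact ⟨⟨j', hj'⟩, by simp [Fin.ext_iff]⟩
      have := (Finset.card_le_card hsub).trans (Finset.card_insert_le _ _)
      rw [ht.2, Finset.card_map, Finset.card_univ, Fintype.card_fin] at this
      omega
    set s : Finset V := Finset.univ.filter (fun a : V => Sum.inl a ∈ t) with hs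
    have hsub : t ⊆ s.map (padEmbL V ℓ) ∪
        (Finset.univ : Finset (Fin ℓ')).map (padEmbU V hℓ) := by
      intro x hx
      rcases x with a | j
      · refine Finset.mem_union_left _ ?_
        simp only [Finset.mem_map, padEmbL_apply]
        exact ⟨a, by simp [hs, hx], rfl⟩
      · refine Finset.mem_union_right _ ?_
        simp only [Finset.mem_map, Finset.mem_univ, true_and]
        exact ⟨⟨j, hnoRest j hx⟩, by simp [Fin.ext_iff]⟩
    have hcard : k ≤ s.card := by
      have := (Finset.card_le_card hsub).trans (Finset.card_union_le _ _)
      rw [ht.2, Finset.card_map, Finset.card_map, Finset.card_univ,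
        Fintype.card_fin] at this
      omega
    obtain ⟨s', hs'sub, hs'card⟩ := Finset.exists_subset_card_eq hcard
    refine ⟨s', ⟨?_, hs'card⟩⟩
    intro a ha b hb hab
    have ha' : Sum.inl a ∈ t := by
      have := hs'sub ha; simpa [hs] using this
    have hb' : Sum.inl b ∈ t := by
      have := hs'sub hb; simpa [hs] using this
    exact (hOld a b).1 (ht.1 ha' hb' (by simpa using hab))
end

section
/- Let s : ℕ → ℕ be a nondecreasing, unbounded function. For n ∈ ℕ, define t(n) = max{ h ∈ ℕ : s(h) · log₂(h) ≤ n } (this set is nonempty, since it contains h = 1, and is bounded above, since s(h) · log₂(h) tends to infinity). Then log₂(t(n)) is o(n); that is, for every c ∈ ℕ there exists n₀ ∈ ℕ such that for all n ≥ n₀, it holds that c · log₂(t(n)) ≤ n. Consequently t(n) is 2^{o(n)}. -/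
/-- Let `s : ℕ → ℕ` be nondecreasing and unbounded, and let
`t(n) = max { h : s(h) · log₂(h) ≤ n }`. Then `log₂(t(n))` is `o(n)`:
for every `c` there is `n₀` such that `c · log₂(t(n)) ≤ n` for all `n ≥ n₀`
(hence `t(n)` is `2^{o(n)}`). -/
theorem log_of_inverse_is_small (s : ℕ → ℕ)
    (hmono : ∀ n, s n ≤ s (n + 1)) (hunb : ∀ c : ℕ, ∃ n, c < s n)
    (t : ℕ → ℕ) (ht : ∀ n : ℕ, t n = sSup {h : ℕ | s h * Nat.log 2 h ≤ n}) :
    ∀ c : ℕ, ∃ n₀ : ℕ, ∀ n ≥ n₀, c * Nat.log 2 (t n) ≤ n := by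
  have hm : Monotone s := monotone_nat_of_le_succ hmono
  have hbdd : ∀ n : ℕ, BddAbove {h : ℕ | s h * Nat.log 2 h ≤ n} := by
    intro n
    obtain ⟨M, hM⟩ := hunb n
    refine ⟨max M 2, ?_⟩
    intro h hh
    by_contra hlt
    push_neg at hlt
    have hM' : M ≤ h := le_of_lt (lt_of_le_of_lt (le_max_left _ _) hlt)
    have h2 : 2 ≤ h := le_of_lt (lt_of_le_of_lt (le_max_right _ _) hlt)
    have hlog : 1 ≤ Nat.log 2 h := Nat.log_pos (by norm_num) h2
    have : n < s h * Nat.log 2 h := by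
      calc n < s M := hM
        _ ≤ s h := hm hM'
        _ = s h * 1 := (mul_one _).symm
        _ ≤ s h * Nat.log 2 h := Nat.mul_le_mul_left _ hlog
    exact absurd hh (not_le.mpr this)
  have hne : ∀ n : ℕ, (1 : ℕ) ∈ {h : ℕ | s h * Nat.log 2 h ≤ n} := by
    intro n; simp [Set.mem_setOf_eq]
  have hmem : ∀ n : ℕ, t n ∈ {h : ℕ | s h * Nat.log 2 h ≤ n} := by
    intro n
    rw [ht n]
    exact Nat.sSup_mem ⟨1, hne n⟩ (hbdd n)
  intro c
  obtain ⟨N, hN⟩ := hunb c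
  refine ⟨s N * Nat.log 2 N, fun n hn => ?_⟩
  have hNmem : N ∈ {h : ℕ | s h * Nat.log 2 h ≤ n} := hn
  have hNt : N ≤ t n := by
    rw [ht n]; exact le_csSup (hbdd n) hNmem
  have : c ≤ s (t n) := le_trans (le_of_lt hN) (hm hNt)
  calc c * Nat.log 2 (t n) ≤ s (t n) * Nat.log 2 (t n) :=
        Nat.mul_le_mul_right _ this
    _ ≤ n := hmem n
end
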